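/- Let 𝔽 be a field, t ∈ V_1⊗⋯⊗V_k a k-tensor over 𝔽, and θ a probability distribution on [k]. Then limsup_{n→∞} SR(t^{⊗n})^{1/n} ≤ ζ^θ(t), where SR denotes slice rank and ζ^θ the upper support functional. -/

import Mathlib

/-!
A change of basis is an invertible restriction, and slice rank does not increase under
restriction, so it suffices to bound `SR(t^N)` through the support `Φ` of `t` in a fixed basis.
Split `t^N` according to the type (empirical distribution) `P` of the `N` columns of an index.
There are polynomially many types in `N`, and the block of type `P` is covered by the slices
along leg `i` through the type class of the marginal `P_i`, which has at most `2^(N H(P_i))`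
elements. Taking the leg with the least `H(P_i) ≤ H_θ(P) ≤ H_θ(Φ)` gives
`SR(t^N) ≤ poly(N) · 2^(N H_θ(Φ))`, and the polynomial factor disappears under `N`-th roots.
-/

open scoped BigOperators
open scoped Classical
open scoped ComplexOrder

noncomputable section

namespace CVZ

variable {k : ℕ}

/-- A concrete `k`-tensor over `F` with index types `I i`: the coefficient array
(in the standard bases) of a multilinear map `V₁ × ⋯ × V_k → F` with `dim V_i = |I i|`. -/
abbrev Tensor (F : Type*) (I : Fin k → Type*) : Type _ := (∀ i, I i) → F

section Basic

variable {F : Type*} [Field F] {I J : Fin k → Type*}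
  [∀ i, Fintype (I i)] [∀ i, DecidableEq (I i)]
  [∀ i, Fintype (J i)] [∀ i, DecidableEq (J i)]

/-- Coefficient array of the restriction `f ∘ (A₁, …, A_k)`, where `A_i : W_i → V_i`
is given by the matrix `A i`. -/
def restrictBy (A : ∀ i, Matrix (I i) (J i) F) (t : Tensor F I) : Tensor F J :=
  fun β => ∑ α : ∀ i, I i, (∏ i, A i (α i) (β i)) * t α

/-- `t` restricts to `s`. -/
def Restricts (t : Tensor F I) (s : Tensor F J) : Prop :=
  ∃ A : ∀ i, Matrix (I i) (J i) F, restrictBy A t = s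

/-- A choice of bases of the spaces `V_i`, encoded as a tuple of invertible matrices. -/
def IsBasisTuple (B : ∀ i, Matrix (I i) (I i) F) : Prop := ∀ i, IsUnit (B i)

/-- Support of a tensor (with respect to the standard bases). -/
def supp (t : Tensor F I) : Set (∀ i, I i) := {α | t α ≠ 0}

end Basic

section Entropy

/-- A probability distribution on the finite set `X`. -/
def IsProbDist {X : Type*} [Fintype X] (P : X → ℝ) : Prop :=
  (∀ x, 0 ≤ P x) ∧ ∑ x, P x = 1

/-- Base-2 Shannon entropy. -/
def H2 {X : Type*} [Fintype X] (P : X → ℝ) : ℝ :=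
  ∑ x, -(P x * Real.logb 2 (P x))

variable {I : Fin k → Type*} [∀ i, Fintype (I i)] [∀ i, DecidableEq (I i)]

/-- The `i`-th marginal of a distribution on a product set. -/
def marg (P : (∀ i, I i) → ℝ) (i : Fin k) : I i → ℝ :=
  fun a => ∑ α : ∀ i, I i, if α i = a then P α else 0

/-- `H_θ(P)`, the `θ`-weighted average of the marginal entropies. -/
def Hw (θ : Fin k → ℝ) (P : (∀ i, I i) → ℝ) : ℝ :=
  ∑ i, θ i * H2 (marg P i)

/-- `H_θ(Φ)`, the supremum of `H_θ(P)` over distributions `P` supported on `Φ`. -/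
def HwSet (θ : Fin k → ℝ) (Φ : Set (∀ i, I i)) : ℝ :=
  sSup {h | ∃ P : (∀ i, I i) → ℝ, IsProbDist P ∧ (∀ α, P α ≠ 0 → α ∈ Φ) ∧ h = Hw θ P}

/-- Maximal points of a subset of the product order. -/
def maxPoints [∀ i, LinearOrder (I i)] (Φ : Set (∀ i, I i)) : Set (∀ i, I i) :=
  {α | α ∈ Φ ∧ ∀ β ∈ Φ, ¬ α < β}

end Entropy

section SuppFunc

variable {F : Type*} [Field F] {I : Fin k → Type*} [∀ i, Fintype (I i)] [∀ i, DecidableEq (I i)]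

/-- The logarithmic Strassen upper support functional `ρ^θ`. -/
def rhoUpper (θ : Fin k → ℝ) (t : Tensor F I) : ℝ :=
  sInf {h | ∃ B : ∀ i, Matrix (I i) (I i) F, IsBasisTuple B ∧
    h = HwSet θ (supp (restrictBy B t))}

/-- The Strassen upper support functional `ζ^θ`. -/
def zetaUpper (θ : Fin k → ℝ) (t : Tensor F I) : ℝ :=
  if t = 0 then 0 else (2 : ℝ) ^ rhoUpper θ t

/-- The logarithmic Strassen lower support functional `ρ_θ`. -/
def rhoLower [∀ i, LinearOrder (I i)] (θ : Fin k → ℝ) (t : Tensor F I) : ℝ :=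
  sSup {h | ∃ B : ∀ i, Matrix (I i) (I i) F, IsBasisTuple B ∧
    h = HwSet θ (maxPoints (supp (restrictBy B t)))}

/-- The Strassen lower support functional `ζ_θ`. -/
def zetaLower [∀ i, LinearOrder (I i)] (θ : Fin k → ℝ) (t : Tensor F I) : ℝ :=
  if t = 0 then 0 else (2 : ℝ) ^ rhoLower θ t

/-- The instability of a tensor. -/
def instab (t : Tensor F I) : ℝ :=
  sSup {ε : ℝ | 0 ≤ ε ∧ ∃ B : ∀ i, Matrix (I i) (I i) F, IsBasisTuple B ∧
    ∃ w : ∀ i, I i → ℝ, (∀ i x, 0 ≤ w i x) ∧ (∀ i, ∃ x, w i x ≠ 0) ∧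
      ∀ a ∈ supp (restrictBy B t), ∑ i, w i (a i) ≤
        ∑ i, ((∑ x : I i, w i x) / (Fintype.card (I i) : ℝ) - ε * ⨆ x : I i, w i x)}

end SuppFunc

section Ops

variable {F : Type*} [Field F]

/-- The unit tensor `⟨r⟩`. -/
def unitTensor (F : Type*) [Field F] (k r : ℕ) : Tensor F (fun _ : Fin k => Fin r) :=
  fun α => if ∀ i j : Fin k, α i = α j then 1 else 0

variable {n m : Fin k → ℕ}

/-- Direct sum of two tensors, with the concatenated (naturally ordered) bases. -/
def dirSumFin (s : Tensor F fun i => Fin (n i)) (t : Tensor F fun i => Fin (m i)) :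
    Tensor F fun i => Fin (n i + m i) :=
  fun α =>
    (if h : ∀ i, (α i : ℕ) < n i then s (fun i => ⟨(α i : ℕ), h i⟩) else 0) +
    (if h : ∀ i, n i ≤ (α i : ℕ) then
      t (fun i => ⟨(α i : ℕ) - n i, by have h1 := (α i).isLt; have h2 := h i; omega⟩) else 0)

/-- Tensor (Kronecker) product of two tensors, with the product bases ordered naturally. -/
def tensMulFin (s : Tensor F fun i => Fin (n i)) (t : Tensor F fun i => Fin (m i)) :
    Tensor F fun i => Fin (n i * m i) :=
  fun α =>
    s (fun i => ⟨(α i : ℕ) / m i, by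
      have h := (α i).isLt
      exact Nat.div_lt_of_lt_mul (lt_of_lt_of_le h (Nat.mul_comm (n i) (m i)).le)⟩) *
    t (fun i => ⟨(α i : ℕ) % m i, by
      have h := (α i).isLt
      have hpos : 0 < n i * m i := Nat.lt_of_le_of_lt (Nat.zero_le _) h
      have hm : 0 < m i := by
        rcases Nat.eq_zero_or_pos (m i) with h0 | h0
        · simp [h0] at hpos
        · exact h0
      exact Nat.mod_lt _ hm⟩)

/-- The `N`-th tensor power of a tensor (grouping the legs into `k` groups). -/
def tpow {I : Fin k → Type*} (t : Tensor F I) (N : ℕ) : Tensor F fun i => Fin N → I i :=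
  fun α => ∏ j : Fin N, t fun i => α i j

end Ops

section Subrank

variable {F : Type*} [Field F] {I : Fin k → Type*} [∀ i, Fintype (I i)] [∀ i, DecidableEq (I i)]

/-- The subrank `Q(t)` of a tensor: the largest `r` with `⟨r⟩ ≤ t`. -/
def Qtensor (t : Tensor F I) : ℕ :=
  sSup {r : ℕ | Restricts t (unitTensor F k r)}

/-- A slice: a tensor of the form `v ⊗ w` with `v` in the `j`-th leg. -/
def IsSlice (s : Tensor F I) : Prop :=
  ∃ (j : Fin k) (v : I j → F) (w : (∀ i : {i : Fin k // i ≠ j}, I i.1) → F),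
    ∀ α, s α = v (α j) * w (fun i => α i.1)

/-- The slice rank of a tensor. -/
def sliceRank (t : Tensor F I) : ℕ :=
  sInf {r : ℕ | ∃ c : Fin r → Tensor F I, (∀ a, IsSlice (c a)) ∧ t = ∑ a, c a}

end Subrank

section Combinatorial

variable {I : Fin k → Type*}

/-- A diagonal: any two distinct elements differ in all coordinates. -/
def IsDiagonal (D : Set (∀ i, I i)) : Prop :=
  ∀ a ∈ D, ∀ b ∈ D, a ≠ b → ∀ i, a i ≠ b i

/-- The `i`-th projection of a set of tuples. -/
def projSet (D : Set (∀ i, I i)) (i : Fin k) : Set (I i) := {x | ∃ a ∈ D, a i = x}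

/-- A free diagonal in `Φ`: a diagonal `D` with `D = Φ ∩ (D₁ × ⋯ × D_k)`. -/
def IsFreeDiagonal (D Φ : Set (∀ i, I i)) : Prop :=
  IsDiagonal D ∧ D = Φ ∩ {a | ∀ i, a i ∈ projSet D i}

/-- The (combinatorial) subrank of a set: the maximal size of a free diagonal. -/
def Qset (Φ : Set (∀ i, I i)) : ℕ :=
  sSup {r : ℕ | ∃ D : Set (∀ i, I i), IsFreeDiagonal D Φ ∧ D.ncard = r}

/-- The `N`-fold coordinatewise power of a set of tuples. -/
def setPow (Φ : Set (∀ i, I i)) (N : ℕ) : Set (∀ i, Fin N → I i) :=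
  {α | ∀ j : Fin N, (fun i => α i j) ∈ Φ}

/-- A tight set. -/
def TightSet (Φ : Set (∀ i, I i)) : Prop :=
  ∃ u : ∀ i, I i → ℤ, (∀ i, Function.Injective (u i)) ∧ ∀ α ∈ Φ, ∑ i, u i (α i) = 0

/-- `Φ` is a combinatorial degeneration of `Ψ` (written `Ψ ⊵ Φ`). -/
def CombDegen (Ψ Φ : Set (∀ i, I i)) : Prop :=
  Φ ⊆ Ψ ∧ ∃ u : ∀ i, I i → ℤ,
    (∀ α ∈ Φ, ∑ i, u i (α i) = 0) ∧ ∀ α ∈ Ψ, α ∉ Φ → 0 < ∑ i, u i (α i)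

end Combinatorial

/-- A tight tensor: some basis tuple gives a tight support. -/
def TightTensor {F : Type*} [Field F] {I : Fin k → Type*} [∀ i, Fintype (I i)]
    [∀ i, DecidableEq (I i)] (t : Tensor F I) : Prop :=
  ∃ B : ∀ i, Matrix (I i) (I i) F, IsBasisTuple B ∧ TightSet (supp (restrictBy B t))

/-- A complete (decreasing) flag of subspaces, `W 0 = ⊤` and `dim (W j) = dim V − j`. -/
def IsCompleteFlag (F : Type*) [Field F] {V : Type*} [AddCommGroup V] [Module F V]
    (W : ℕ → Submodule F V) : Prop :=
  Antitone W ∧ W 0 = ⊤ ∧ ∀ j : ℕ, Module.finrank F (W j) = Module.finrank F V - j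

/-- Evaluation of (the multilinear map associated with) `t` at a tuple of vectors. -/
def eval {F : Type*} [Field F] {I : Fin k → Type*} [∀ i, Fintype (I i)] [∀ i, DecidableEq (I i)]
    (t : Tensor F I) (v : ∀ i, I i → F) : F :=
  ∑ α : ∀ i, I i, (∏ i, v i (α i)) * t α

/-- The support of `t` with respect to a tuple of complete flags. -/
def suppFlag {F : Type*} [Field F] {n : Fin k → ℕ} (t : Tensor F fun i => Fin (n i))
    (W : ∀ i, ℕ → Submodule F (Fin (n i) → F)) : Set (∀ i, Fin (n i)) :=
  {α | ∃ v : ∀ i, Fin (n i) → F, (∀ i, v i ∈ W i (α i : ℕ)) ∧ eval t v ≠ 0}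

section Quantum

variable {I : Fin k → Type*} [∀ i, Fintype (I i)] [∀ i, DecidableEq (I i)]

/-- Von Neumann entropy (base 2) of a Hermitian matrix. -/
def vnEntropy {d : Type*} [Fintype d] [DecidableEq d] (ρ : Matrix d d ℂ) : ℝ :=
  if h : ρ.IsHermitian then ∑ x, -(h.eigenvalues x * Real.logb 2 (h.eigenvalues x)) else 0

/-- The `j`-th marginal (reduced density matrix) of the pure state `|t⟩⟨t| / ⟨t|t⟩`. -/
def margMat (t : Tensor ℂ I) (j : Fin k) : Matrix (I j) (I j) ℂ :=
  fun a b =>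
    (∑ α : ∀ i, I i, ∑ β : ∀ i, I i,
      if α j = a ∧ β j = b ∧ (∀ i, i ≠ j → α i = β i) then t α * star (t β) else 0) /
    ∑ α : ∀ i, I i, t α * star (t α)

/-- The logarithmic lower quantum functional `E_θ` for `θ` a distribution on `[k]`. -/
def Ewq (θ : Fin k → ℝ) (t : Tensor ℂ I) : ℝ :=
  sSup {h | ∃ A : ∀ i, Matrix (I i) (I i) ℂ, IsBasisTuple A ∧
    h = ∑ j, θ j * vnEntropy (margMat (restrictBy A t) j)}

/-- The marginal (reduced density matrix) on the legs in `S` of the pure state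
`|t⟩⟨t| / ⟨t|t⟩`. -/
def margMatSet (t : Tensor ℂ I) (S : Finset (Fin k)) :
    Matrix (∀ i : {x : Fin k // x ∈ S}, I i.1) (∀ i : {x : Fin k // x ∈ S}, I i.1) ℂ :=
  fun a b =>
    (∑ α : ∀ i, I i, ∑ β : ∀ i, I i,
      if (∀ (i : Fin k) (hi : i ∈ S), α i = a ⟨i, hi⟩ ∧ β i = b ⟨i, hi⟩) ∧
         (∀ i, i ∉ S → α i = β i)
      then t α * star (t β) else 0) /
    ∑ α : ∀ i, I i, t α * star (t α)

/-- A probability distribution on the bipartitions `{S, S̄}` of `[k]` (encoded by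
choosing a representative `S` for each bipartition occurring in the support). -/
def IsBipDist (θ : Finset (Fin k) → ℝ) : Prop :=
  (∀ S, 0 ≤ θ S) ∧ (∀ S, θ S ≠ 0 → S.Nonempty ∧ Sᶜ.Nonempty) ∧
    ∑ S : Finset (Fin k), θ S = 1

/-- The logarithmic lower quantum functional `E_θ` for `θ` a distribution on bipartitions. -/
def EwqBip (θ : Finset (Fin k) → ℝ) (t : Tensor ℂ I) : ℝ :=
  sSup {h | ∃ A : ∀ i, Matrix (I i) (I i) ℂ, IsBasisTuple A ∧
    h = ∑ S : Finset (Fin k), θ S * vnEntropy (margMatSet (restrictBy A t) S)}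

/-- The lower quantum functional `F_θ`. -/
def FwqBip (θ : Finset (Fin k) → ℝ) (t : Tensor ℂ I) : ℝ :=
  if t = 0 then 0 else (2 : ℝ) ^ EwqBip θ t

/-- Degeneration: `t` lies in the closure of the `GL × ⋯ × GL`-orbit of `s`. -/
def Degen (s t : Tensor ℂ I) : Prop :=
  t ∈ closure {u : Tensor ℂ I | ∃ A : ∀ i, Matrix (I i) (I i) ℂ,
    IsBasisTuple A ∧ restrictBy A s = u}

end Quantum

/-- Trace norm of a complex matrix: `Tr √(AᴴA)`. -/
def traceNorm {d : Type*} [Fintype d] [DecidableEq d] (A : Matrix d d ℂ) : ℝ :=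
  (((Matrix.posSemidef_conjTranspose_mul_self A).1.eigenvectorUnitary.1 *
      Matrix.diagonal (((↑) : ℝ → ℂ) ∘ (Real.sqrt ∘ (Matrix.posSemidef_conjTranspose_mul_self A).1.eigenvalues)) *
      (star (Matrix.posSemidef_conjTranspose_mul_self A).1.eigenvectorUnitary : Matrix d d ℂ)).trace).re

/-- `conjIter ρ X j = X_j ⋯ X_2 X_1 ρ X_1 X_2 ⋯ X_j`. -/
def conjIter {d : Type*} [Fintype d] (ρ : Matrix d d ℂ) {n : ℕ}
    (X : Fin n → Matrix d d ℂ) : ℕ → Matrix d d ℂ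
  | 0 => ρ
  | (j + 1) => if h : j < n then X ⟨j, h⟩ * conjIter ρ X j * X ⟨j, h⟩ else conjIter ρ X j

/-- A tricolored sum-free set in `G × G × G`. -/
def IsTriColoredSumFree {G : Type*} [AddCommGroup G] (Γ : Set (G × G × G)) : Prop :=
  (∀ a ∈ Γ, ∀ b ∈ Γ, a ≠ b → a.1 ≠ b.1 ∧ a.2.1 ≠ b.2.1 ∧ a.2.2 ≠ b.2.2) ∧
  ∀ x y z : G, (∃ a ∈ Γ, a.1 = x) → (∃ a ∈ Γ, a.2.1 = y) → (∃ a ∈ Γ, a.2.2 = z) →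
    (x + y + z = 0 ↔ (x, y, z) ∈ Γ)

/-- The maximal size `s₃(G)` of a tricolored sum-free set in `G × G × G`. -/
def s3 (G : Type*) [AddCommGroup G] : ℕ :=
  sSup {r : ℕ | ∃ Γ : Set (G × G × G), IsTriColoredSumFree Γ ∧ Γ.ncard = r}

/-- Binary entropy function (base 2), with the convention `0 · log 0 = 0`. -/
def binH (p : ℝ) : ℝ := -(p * Real.logb 2 p) - (1 - p) * Real.logb 2 (1 - p)

open Filter Topology

section SliceRank

variable {F : Type*} [Field F] {I : Fin k → Type*}

def blockOf (u : Tensor F I) {L : Type*} (label : (∀ i, I i) → L) (l : L) : Tensor F I :=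
  fun α => if label α = l then u α else 0

lemma sum_blockOf (u : Tensor F I) {L : Type*} (label : (∀ i, I i) → L) (T : Finset L)
    (hT : ∀ α, u α ≠ 0 → label α ∈ T) : ∑ l ∈ T, blockOf u label l = u := by
  funext α
  rw [Finset.sum_apply]
  simp only [blockOf, Finset.sum_ite_eq]
  split_ifs with h
  · rfl
  · exact (not_not.1 (mt (hT α) h)).symm

lemma isSlice_blockOf_apply (u : Tensor F I) (j : Fin k) (x : I j) :
    IsSlice (blockOf u (fun α => α j) x) := by
  refine ⟨j, fun a => if a = x then 1 else 0,
    fun γ => u ((Equiv.piSplitAt j I).symm (x, γ)), fun α => ?_⟩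
  by_cases h : α j = x
  · subst h
    simpa [blockOf] using congrArg u ((Equiv.piSplitAt j I).symm_apply_apply α).symm
  · simp [blockOf, h]

lemma exists_fin_slices_sum_eq {γ : Type*} (s : Finset γ) (c : γ → Tensor F I)
    (hc : ∀ a ∈ s, IsSlice (c a)) :
    ∃ c' : Fin s.card → Tensor F I, (∀ b, IsSlice (c' b)) ∧ ∑ a ∈ s, c a = ∑ b, c' b :=
  ⟨fun b => c (s.equivFin.symm b), fun b => hc _ (s.equivFin.symm b).2, by
    rw [← Finset.sum_coe_sort s c]
    exact (Equiv.sum_comp s.equivFin.symm (fun x => c x)).symm⟩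

lemma sliceRank_sum_le_card {γ : Type*} (s : Finset γ) (c : γ → Tensor F I)
    (hc : ∀ a ∈ s, IsSlice (c a)) : sliceRank (∑ a ∈ s, c a) ≤ s.card :=
  Nat.sInf_le (exists_fin_slices_sum_eq s c hc)

lemma sliceRank_zero : sliceRank (0 : Tensor F I) = 0 := by
  simpa using sliceRank_sum_le_card (∅ : Finset ℕ) (fun _ => (0 : Tensor F I)) (by simp)

lemma sliceRank_le_card_of_apply_mem (u : Tensor F I) (j : Fin k) (S : Finset (I j))
    (hS : ∀ α, u α ≠ 0 → α j ∈ S) : sliceRank u ≤ S.card := by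
  rw [← sum_blockOf u (fun α => α j) S hS]
  exact sliceRank_sum_le_card S _ fun x _ => isSlice_blockOf_apply u j x

variable [NeZero k] [∀ i, Fintype (I i)]

lemma exists_sum_slices (u : Tensor F I) :
    ∃ c : Fin (sliceRank u) → Tensor F I, (∀ a, IsSlice (c a)) ∧ u = ∑ a, c a := by
  obtain ⟨c, hc, hsum⟩ := exists_fin_slices_sum_eq Finset.univ _
    fun x _ => isSlice_blockOf_apply u 0 x
  exact Nat.sInf_mem (s := {r | ∃ c : Fin r → Tensor F I, (∀ a, IsSlice (c a)) ∧ u = ∑ a, c a})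
    ⟨_, c, hc, by rw [← hsum, sum_blockOf u _ _ fun α _ => Finset.mem_univ _]⟩

lemma sliceRank_sum_le {γ : Type*} (s : Finset γ) (f : γ → Tensor F I) :
    sliceRank (∑ a ∈ s, f a) ≤ ∑ a ∈ s, sliceRank (f a) := by
  choose c hc hfc using fun a => exists_sum_slices (f a)
  calc sliceRank (∑ a ∈ s, f a)
      = sliceRank (∑ p ∈ s.sigma fun a => (Finset.univ : Finset (Fin (sliceRank (f a)))),
          c p.1 p.2) := by
        rw [Finset.sum_sigma]
        exact congrArg sliceRank (Finset.sum_congr rfl fun a _ => hfc a)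
    _ ≤ (s.sigma fun a => (Finset.univ : Finset (Fin (sliceRank (f a))))).card :=
        sliceRank_sum_le_card _ _ fun p _ => hc _ _
    _ = ∑ a ∈ s, sliceRank (f a) := by simp [Finset.card_sigma]

lemma sliceRank_le_sum_blockOf (u : Tensor F I) {L : Type*} (label : (∀ i, I i) → L)
    (T : Finset L) (hT : ∀ α, u α ≠ 0 → label α ∈ T) :
    sliceRank u ≤ ∑ l ∈ T, sliceRank (blockOf u label l) := by
  conv_lhs => rw [← sum_blockOf u label T hT]
  exact sliceRank_sum_le T _

end SliceRank

section Restriction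

variable {F : Type*} [Field F] {I J : Fin k → Type*} [∀ i, Fintype (I i)]

lemma isSlice_restrictBy (A : ∀ i, Matrix (I i) (J i) F) {u : Tensor F I} (hu : IsSlice u) :
    IsSlice (restrictBy A u) := by
  obtain ⟨j, v, w, huvw⟩ := hu
  refine ⟨j, fun b => ∑ a, A j a b * v a,
    fun γ => ∑ δ : ∀ i : {i : Fin k // i ≠ j}, I i.1,
      (∏ i : {i : Fin k // i ≠ j}, A i.1 (δ i) (γ i)) * w δ, fun β => ?_⟩
  rw [restrictBy, ← (Equiv.piSplitAt j I).symm.sum_comp, Fintype.sum_prod_type,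
    Finset.sum_mul_sum]
  refine Finset.sum_congr rfl fun a _ => Finset.sum_congr rfl fun δ _ => ?_
  have hsplit : ∀ i : {i : Fin k // i ≠ j}, (Equiv.piSplitAt j I).symm (a, δ) i.1 = δ i :=
    fun i => by simp [i.2]
  rw [huvw, Fintype.prod_eq_mul_prod_subtype_ne _ j]
  simp only [Equiv.piSplitAt_symm_apply, dite_true, hsplit]
  ring

lemma restrictBy_sum (A : ∀ i, Matrix (I i) (J i) F) {γ : Type*} (s : Finset γ)
    (f : γ → Tensor F I) :
    restrictBy A (∑ a ∈ s, f a) = ∑ a ∈ s, restrictBy A (f a) := by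
  funext β
  simp only [restrictBy, Finset.sum_apply, Finset.mul_sum]
  exact Finset.sum_comm

lemma sliceRank_restrictBy_le [NeZero k] (A : ∀ i, Matrix (I i) (J i) F) (u : Tensor F I) :
    sliceRank (restrictBy A u) ≤ sliceRank u := by
  obtain ⟨c, hc, hu⟩ := exists_sum_slices u
  conv_lhs => rw [hu, restrictBy_sum]
  simpa using sliceRank_sum_le_card Finset.univ _ fun a _ => isSlice_restrictBy A (hc a)

lemma restrictBy_one [∀ i, DecidableEq (I i)] (t : Tensor F I) :
    restrictBy (fun i => (1 : Matrix (I i) (I i) F)) t = t := by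
  funext β
  show ∑ α : ∀ i, I i, (∏ i, (1 : Matrix (I i) (I i) F) (α i) (β i)) * t α = t β
  rw [Finset.sum_eq_single β]
  · simp
  · intro α _ hαβ
    obtain ⟨i, hi⟩ := Function.ne_iff.mp hαβ
    have hz : (1 : Matrix (I i) (I i) F) (α i) (β i) = 0 := Matrix.one_apply_ne hi
    rw [Finset.prod_eq_zero (Finset.mem_univ i) hz, zero_mul]
  · exact fun h => absurd (Finset.mem_univ β) h

lemma restrictBy_restrictBy {K : Fin k → Type*} [∀ i, Fintype (J i)]
    (A : ∀ i, Matrix (J i) (K i) F) (B : ∀ i, Matrix (I i) (J i) F) (t : Tensor F I) :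
    restrictBy A (restrictBy B t) = restrictBy (fun i => B i * A i) t := by
  funext γ
  simp only [restrictBy, Matrix.mul_apply, Finset.mul_sum]
  rw [Finset.sum_comm]
  refine Finset.sum_congr rfl fun α _ => ?_
  rw [Finset.prod_univ_sum, Fintype.piFinset_univ, Finset.sum_mul]
  refine Finset.sum_congr rfl fun β _ => ?_
  rw [Finset.prod_mul_distrib]
  ring

lemma tpow_restrictBy (A : ∀ i, Matrix (I i) (J i) F) (t : Tensor F I) (N : ℕ) :
    tpow (restrictBy A t) N =
      restrictBy (fun i => Matrix.of fun (β : Fin N → I i) (γ : Fin N → J i) =>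
        ∏ j, A i (β j) (γ j)) (tpow t N) := by
  funext γ
  simp only [tpow, restrictBy, Matrix.of_apply]
  rw [Finset.prod_univ_sum, Fintype.piFinset_univ,
    ← (Equiv.piComm fun (i : Fin k) (_ : Fin N) => I i).symm.sum_comp]
  refine Finset.sum_congr rfl fun β _ => ?_
  rw [Finset.prod_mul_distrib, Finset.prod_comm]
  rfl

lemma sliceRank_tpow_le_of_isBasisTuple [NeZero k] [∀ i, DecidableEq (I i)]
    {B : ∀ i, Matrix (I i) (I i) F} (hB : IsBasisTuple B) (t : Tensor F I) (N : ℕ) :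
    sliceRank (tpow t N) ≤ sliceRank (tpow (restrictBy B t) N) := by
  have hinv : restrictBy (fun i => (B i)⁻¹) (restrictBy B t) = t := by
    rw [restrictBy_restrictBy]
    simp_rw [Matrix.mul_nonsing_inv _ ((Matrix.isUnit_iff_isUnit_det _).mp (hB _))]
    exact restrictBy_one t
  conv_lhs => rw [← hinv, tpow_restrictBy]
  exact sliceRank_restrictBy_le _ _

end Restriction

section Entropy

variable {X : Type*} [Fintype X]

lemma H2_eq_sum_negMulLog (P : X → ℝ) : H2 P = (∑ x, Real.negMulLog (P x)) / Real.log 2 := by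
  rw [H2, Finset.sum_div]
  refine Finset.sum_congr rfl fun x _ => ?_
  rw [Real.negMulLog, Real.logb]
  ring

lemma H2_le_card_div_log_two {P : X → ℝ} (hP : ∀ x, 0 ≤ P x) :
    H2 P ≤ Fintype.card X / Real.log 2 := by
  rw [H2_eq_sum_negMulLog]
  gcongr
  calc ∑ x, Real.negMulLog (P x) ≤ ∑ _x : X, (1 : ℝ) :=
        Finset.sum_le_sum fun x _ =>
          (Real.negMulLog_le_one_sub_self (hP x)).trans (by linarith [hP x])
    _ = Fintype.card X := by simp

lemma IsProbDist.exists_le_sum_mul {θ : X → ℝ} (hθ : IsProbDist θ) (f : X → ℝ) :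
    ∃ i, f i ≤ ∑ j, θ j * f j := by
  obtain ⟨i, -, hi⟩ := Finset.exists_min_image Finset.univ f
    (Finset.nonempty_of_sum_ne_zero (by rw [hθ.2]; exact one_ne_zero))
  refine ⟨i, ?_⟩
  calc f i = ∑ j, θ j * f i := by rw [← Finset.sum_mul, hθ.2, one_mul]
    _ ≤ ∑ j, θ j * f j :=
        Finset.sum_le_sum fun j _ => mul_le_mul_of_nonneg_left (hi j (Finset.mem_univ j)) (hθ.1 j)

variable {I : Fin k → Type*} [∀ i, Fintype (I i)] [∀ i, DecidableEq (I i)]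

lemma Hw_le_HwSet {θ : Fin k → ℝ} (hθ : ∀ i, 0 ≤ θ i) {P : (∀ i, I i) → ℝ} (hP : IsProbDist P)
    {Φ : Set (∀ i, I i)} (hPΦ : ∀ α, P α ≠ 0 → α ∈ Φ) : Hw θ P ≤ HwSet θ Φ := by
  refine le_csSup ⟨∑ i, θ i * (Fintype.card (I i) / Real.log 2), ?_⟩ ⟨P, hP, hPΦ, rfl⟩
  rintro _ ⟨Q, hQ, -, rfl⟩
  refine Finset.sum_le_sum fun i _ => mul_le_mul_of_nonneg_left ?_ (hθ i)
  exact H2_le_card_div_log_two fun a => Finset.sum_nonneg fun α _ => by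
    split_ifs
    exacts [hQ.1 α, le_rfl]

end Entropy

section Empirical

variable {X : Type*} [DecidableEq X] {N : ℕ}

def empirical (β : Fin N → X) : X → ℝ :=
  fun x => ((Finset.univ.filter fun j => β j = x).card : ℝ) / N

lemma isProbDist_empirical [Fintype X] (hN : N ≠ 0) (β : Fin N → X) :
    IsProbDist (empirical β) := by
  refine ⟨fun x => div_nonneg (Nat.cast_nonneg _) (Nat.cast_nonneg _), ?_⟩
  simp [empirical, ← Finset.sum_div, ← Nat.cast_sum, Finset.sum_card_fiberwise_eq_card_filter, hN]

lemma exists_eq_of_empirical_ne_zero {β : Fin N → X} {x : X} (hx : empirical β x ≠ 0) :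
    ∃ j, β j = x := by
  by_contra! h
  simp [empirical, Finset.filter_false_of_mem fun j _ => h j] at hx

lemma empirical_comp [Fintype X] {Y : Type*} [DecidableEq Y] (f : X → Y) (β : Fin N → X)
    (y : Y) :
    empirical (f ∘ β) y = ∑ x ∈ Finset.univ.filter fun x => f x = y, empirical β x := by
  simp only [empirical, ← Finset.sum_div, ← Nat.cast_sum,
    Finset.sum_card_fiberwise_eq_card_filter, Finset.mem_filter, Finset.mem_univ, true_and,
    Function.comp_apply]

lemma marg_empirical {I : Fin k → Type*} [∀ i, Fintype (I i)] [∀ i, DecidableEq (I i)]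
    (β : Fin N → ∀ i, I i) (i : Fin k) :
    marg (empirical β) i = empirical fun j => β j i := by
  funext a
  rw [marg, ← Finset.sum_filter]
  exact (empirical_comp (fun α => α i) β a).symm

lemma prod_empirical [Fintype X] (hN : N ≠ 0) (β : Fin N → X) :
    ∏ j, empirical β (β j) = 2 ^ (-(N * H2 (empirical β))) := by
  set P := empirical β
  have hcount : ∀ x, ((Finset.univ.filter fun j => β j = x).card : ℝ) = N * P x := fun x => by
    simp only [P, empirical]
    field_simp
  have hpow : ∀ x, P x ^ (Finset.univ.filter fun j => β j = x).card
      = (2 : ℝ) ^ (N * (P x * Real.logb 2 (P x))) := fun x => by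
    have hx0 : 0 ≤ P x := (isProbDist_empirical hN β).1 x
    rcases hx0.eq_or_lt with hx | hx
    · have h0 : (Finset.univ.filter fun j => β j = x).card = 0 :=
        Nat.cast_eq_zero.1 ((hcount x).trans (by rw [← hx, mul_zero]))
      simp [h0, ← hx]
    · calc P x ^ (Finset.univ.filter fun j => β j = x).card
          = ((2 : ℝ) ^ Real.logb 2 (P x)) ^ (N * P x) := by
            rw [Real.rpow_logb two_pos (by norm_num) hx, ← hcount, Real.rpow_natCast]
        _ = (2 : ℝ) ^ (N * (P x * Real.logb 2 (P x))) := by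
            rw [← Real.rpow_mul zero_le_two]
            ring_nf
  rw [← Finset.prod_fiberwise' Finset.univ β P]
  simp only [Finset.prod_const, hpow]
  rw [← Real.rpow_sum_of_pos two_pos, H2, Finset.sum_neg_distrib, ← Finset.mul_sum]
  ring_nf

lemma card_empirical_eq_le [Fintype X] (hN : N ≠ 0) (β₀ : Fin N → X) :
    ((Finset.univ.filter fun β : Fin N → X => empirical β = empirical β₀).card : ℝ)
      ≤ 2 ^ (N * H2 (empirical β₀)) := by
  set P := empirical β₀
  set S := Finset.univ.filter fun β : Fin N → X => empirical β = P
  have htotal : ∑ β : Fin N → X, ∏ j, P (β j) = 1 := by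
    have := Finset.sum_pow' Finset.univ P N
    rwa [Fintype.piFinset_univ, (isProbDist_empirical hN β₀).2, one_pow, eq_comm] at this
  -- under `P^⊗N` every sequence of type `P` has the same probability `2^(-N H(P))`
  have hclass : ∀ β ∈ S, ∏ j, P (β j) = 2 ^ (-(N * H2 P)) := fun β hβ => by
    rw [← (Finset.mem_filter.1 hβ).2, prod_empirical hN]
  have hle : (S.card : ℝ) * (2 ^ (N * H2 P))⁻¹ ≤ 1 :=
    calc (S.card : ℝ) * (2 ^ (N * H2 P))⁻¹ = ∑ β ∈ S, ∏ j, P (β j) := by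
          rw [Finset.sum_congr rfl hclass, Finset.sum_const, nsmul_eq_mul,
            Real.rpow_neg zero_le_two]
      _ ≤ ∑ β : Fin N → X, ∏ j, P (β j) :=
          Finset.sum_le_sum_of_subset_of_nonneg (Finset.subset_univ S) fun β _ _ =>
            Finset.prod_nonneg fun j _ => (isProbDist_empirical hN β₀).1 _
      _ = 1 := htotal
  simpa using (mul_inv_le_iff₀ (by positivity)).mp hle

lemma card_image_empirical_le [Fintype X] :
    ((Finset.univ : Finset (Fin N → X)).image empirical).card ≤ (N + 1) ^ Fintype.card X := by
  let count : (Fin N → X) → X → Fin (N + 1) := fun β x =>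
    ⟨(Finset.univ.filter fun j => β j = x).card,
      Nat.lt_succ_of_le ((Finset.card_filter_le _ _).trans_eq (Finset.card_fin N))⟩
  have himage : (Finset.univ : Finset (Fin N → X)).image empirical
      = (Finset.univ.image count).image fun c x => ((c x : ℕ) : ℝ) / N := by
    rw [Finset.image_image]
    rfl
  rw [himage]
  calc _ ≤ (Finset.univ.image count).card := Finset.card_image_le
    _ ≤ Fintype.card (X → Fin (N + 1)) := Finset.card_le_univ _
    _ = (N + 1) ^ Fintype.card X := by simp

end Empirical

section TensorPower

variable {F : Type*} [Field F] {I : Fin k → Type*} {N : ℕ}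

lemma tpow_zero (hN : N ≠ 0) : tpow (0 : Tensor F I) N = 0 := by
  funext α
  simp [tpow, hN]

lemma mem_supp_of_empirical_ne_zero [∀ i, DecidableEq (I i)] {s : Tensor F I}
    {α : ∀ i, Fin N → I i} (hα : tpow s N α ≠ 0) {φ : ∀ i, I i}
    (hφ : empirical (fun j i => α i j) φ ≠ 0) : φ ∈ supp s := by
  obtain ⟨j, rfl⟩ := exists_eq_of_empirical_ne_zero hφ
  exact fun h => hα (Finset.prod_eq_zero (Finset.mem_univ j) h)

variable [∀ i, Fintype (I i)] [∀ i, DecidableEq (I i)]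

/-- Indices of the same type have the same marginal types, so a block of one type is covered by
the slices along any leg `i` through the type class of the `i`-th marginal. -/
lemma sliceRank_blockOf_empirical_le (hN : N ≠ 0) (u : Tensor F fun i => Fin N → I i)
    (α₀ : ∀ i, Fin N → I i) (i : Fin k) :
    (sliceRank (blockOf u (fun α => empirical (fun j i => α i j)) (empirical (fun j i => α₀ i j)))
      : ℝ) ≤ 2 ^ (N * H2 (marg (empirical (fun j i => α₀ i j)) i)) := by
  rw [marg_empirical]
  refine le_trans ?_ (card_empirical_eq_le hN (α₀ i))
  refine Nat.cast_le.2 (sliceRank_le_card_of_apply_mem _ i _ fun α hα => ?_)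
  simp only [blockOf, ne_eq, ite_eq_right_iff, Classical.not_imp] at hα
  have := congrArg (marg · i) hα.1
  simp only [marg_empirical] at this
  exact Finset.mem_filter.2 ⟨Finset.mem_univ _, this⟩

lemma sliceRank_tpow_le [NeZero k] {θ : Fin k → ℝ} (hθ : IsProbDist θ) (s : Tensor F I)
    (hN : N ≠ 0) :
    (sliceRank (tpow s N) : ℝ)
      ≤ ((N : ℝ) + 1) ^ Fintype.card (∀ i, I i) * 2 ^ (N * HwSet θ (supp s)) := by
  set label := fun α : ∀ i, Fin N → I i => empirical (fun j i => α i j)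
  set T := (Finset.univ.filter fun α => tpow s N α ≠ 0).image label
  have hblock : ∀ P ∈ T, (sliceRank (blockOf (tpow s N) label P) : ℝ)
      ≤ 2 ^ (N * HwSet θ (supp s)) := by
    intro P hP
    obtain ⟨α₀, hα₀, rfl⟩ := Finset.mem_image.1 hP
    obtain ⟨i, hi⟩ := hθ.exists_le_sum_mul fun i => H2 (marg (label α₀) i)
    have hHw : Hw θ (label α₀) ≤ HwSet θ (supp s) :=
      Hw_le_HwSet hθ.1 (isProbDist_empirical hN _)
        fun φ hφ => mem_supp_of_empirical_ne_zero (Finset.mem_filter.1 hα₀).2 hφ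
    calc _ ≤ (2 : ℝ) ^ (N * H2 (marg (label α₀) i)) := sliceRank_blockOf_empirical_le hN _ α₀ i
      _ ≤ 2 ^ (N * HwSet θ (supp s)) := by gcongr; exacts [one_le_two, hi.trans hHw]
  have hcard : T.card ≤ (N + 1) ^ Fintype.card (∀ i, I i) :=
    (Finset.card_le_card fun P hP => by
      obtain ⟨α, -, rfl⟩ := Finset.mem_image.1 hP
      exact Finset.mem_image_of_mem _ (Finset.mem_univ _)).trans card_image_empirical_le
  calc (sliceRank (tpow s N) : ℝ) ≤ ∑ P ∈ T, (sliceRank (blockOf (tpow s N) label P) : ℝ) := by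
        exact_mod_cast sliceRank_le_sum_blockOf _ label T fun α hα =>
          Finset.mem_image_of_mem _ (Finset.mem_filter.2 ⟨Finset.mem_univ _, hα⟩)
    _ ≤ T.card * 2 ^ (N * HwSet θ (supp s)) := by
        simpa using Finset.sum_le_sum hblock
    _ ≤ _ := by gcongr; exact_mod_cast hcard

end TensorPower

lemma limsup_rpow_inv_le {a : ℕ → ℝ} (ha : ∀ N, 0 ≤ a N) (M : ℕ) {c : ℝ} (hc : 0 ≤ c)
    (h : ∀ N, N ≠ 0 → a N ≤ ((N : ℝ) + 1) ^ M * c ^ N) :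
    limsup (fun N => a N ^ (N : ℝ)⁻¹) atTop ≤ c := by
  have hbound : ∀ᶠ N : ℕ in atTop, a N ^ (N : ℝ)⁻¹ ≤ ((N : ℝ) + 1) ^ ((M : ℝ) / N) * c := by
    filter_upwards [eventually_ne_atTop 0] with N hN
    calc a N ^ (N : ℝ)⁻¹ ≤ ((N + 1) ^ M * c ^ N) ^ (N : ℝ)⁻¹ :=
          Real.rpow_le_rpow (ha N) (h N hN) (by positivity)
      _ = ((N : ℝ) + 1) ^ ((M : ℝ) / N) * c := by
          rw [Real.mul_rpow (by positivity) (by positivity), ← Real.rpow_natCast,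
            ← Real.rpow_natCast c, ← Real.rpow_mul (by positivity), ← Real.rpow_mul hc,
            mul_inv_cancel₀ (Nat.cast_ne_zero.2 hN), Real.rpow_one, div_eq_mul_inv]
  have hroot : Tendsto (fun N : ℕ => ((N : ℝ) + 1) ^ ((M : ℝ) / N)) atTop (𝓝 1) := by
    refine ((tendsto_rpow_div_mul_add M 1 (-1) zero_ne_one).comp
      (tendsto_atTop_add_const_right atTop 1 tendsto_natCast_atTop_atTop)).congr fun N => ?_
    simp
  have htend := hroot.mul_const c
  rw [one_mul] at htend
  calc limsup (fun N => a N ^ (N : ℝ)⁻¹) atTop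
      ≤ limsup (fun N : ℕ => ((N : ℝ) + 1) ^ ((M : ℝ) / N) * c) atTop :=
        limsup_le_limsup hbound
          (isCoboundedUnder_le_of_le atTop fun N => Real.rpow_nonneg (ha N) _)
          htend.isBoundedUnder_le
    _ = c := htend.limsup_eq

lemma le_rpow_csInf {b L : ℝ} (hb : 1 < b) {S : Set ℝ} (hS : S.Nonempty)
    (h : ∀ x ∈ S, L ≤ b ^ x) : L ≤ b ^ sInf S := by
  rcases le_or_gt L 0 with hL | hL
  · exact hL.trans (by positivity)
  · rw [← Real.logb_le_iff_le_rpow hb hL]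
    exact le_csInf hS fun x hx => (Real.logb_le_iff_le_rpow hb hL).2 (h x hx)

lemma limsup_sliceRank_tpow_le [NeZero k] {F : Type*} [Field F] {I : Fin k → Type*}
    [∀ i, Fintype (I i)] [∀ i, DecidableEq (I i)] {θ : Fin k → ℝ} (hθ : IsProbDist θ)
    (t : Tensor F I) {B : ∀ i, Matrix (I i) (I i) F} (hB : IsBasisTuple B) :
    limsup (fun N : ℕ => (sliceRank (tpow t N) : ℝ) ^ ((N : ℝ)⁻¹)) atTop
      ≤ 2 ^ HwSet θ (supp (restrictBy B t)) := by
  refine limsup_rpow_inv_le (fun N => Nat.cast_nonneg _) (Fintype.card (∀ i, I i))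
    (by positivity) fun N hN => ?_
  calc (sliceRank (tpow t N) : ℝ) ≤ sliceRank (tpow (restrictBy B t) N) := by
        exact_mod_cast sliceRank_tpow_le_of_isBasisTuple hB t N
    _ ≤ _ := sliceRank_tpow_le hθ _ hN
    _ = _ := by
        congr 1
        rw [← Real.rpow_natCast, ← Real.rpow_mul zero_le_two, mul_comm]

/-- asymptotic slice rank is at most the upper support functional. -/
theorem statement16 {k : ℕ} {F : Type*} [Field F] {n : Fin k → ℕ}
    (t : Tensor F fun i => Fin (n i)) (θ : Fin k → ℝ) (hθ : IsProbDist θ) :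
    Filter.limsup (fun N : ℕ => (sliceRank (tpow t N) : ℝ) ^ ((N : ℝ)⁻¹)) atTop
      ≤ zetaUpper θ t := by
  rcases eq_or_ne t 0 with rfl | ht
  · have hzero : (fun N : ℕ => (sliceRank (tpow (0 : Tensor F fun i => Fin (n i)) N) : ℝ)
        ^ ((N : ℝ)⁻¹)) =ᶠ[atTop] fun _ => 0 := by
      filter_upwards [eventually_ne_atTop 0] with N hN
      rw [tpow_zero hN, sliceRank_zero, Nat.cast_zero, Real.zero_rpow (by positivity)]
    rw [zetaUpper, if_pos rfl, limsup_congr hzero, limsup_const]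
  have : NeZero k := ⟨by rintro rfl; simp [IsProbDist] at hθ⟩
  rw [zetaUpper, if_neg ht]
  refine le_rpow_csInf one_lt_two ⟨_, 1, fun i => isUnit_one, rfl⟩ ?_
  rintro _ ⟨B, hB, rfl⟩
  exact limsup_sliceRank_tpow_le hθ t hB

end CVZ

end
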